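/- Let k ∈ ℕ and let w be a binary word of length 2k with no factor 11. Then −F_{2k+2} ≤ val_F(100w) < 0. -/
import Mathlib


/-- Fibonacci sequence with `F 0 = 1`, `F 1 = 1`, `F 2 = 2`. -/
def F : ℕ → ℤ
  | 0 => 1
  | 1 => 1
  | (n+2) => F (n+1) + F n

/-- Numerical value of a binary digit. -/
def bv (x : Bool) : ℤ := if x then 1 else 0

/-- Value of an odd-length binary word `w = w_{2k+1} ⋯ w_1` (most significant
digit first): `val_F(w) = Σ_{i=1}^{2k} w_i F_i − w_{2k+1} F_{2k}`. -/
def valF (w : List Bool) : ℤ :=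
  (∑ i ∈ Finset.range (w.length - 1), bv (w.reverse.getD i false) * F (i+1))
    - bv (w.reverse.getD (w.length - 1) false) * F (w.length - 1)

/-- The word has no factor `11`. -/
def no11 (w : List Bool) : Prop :=
  List.Chain' (fun x y => ¬(x = true ∧ y = true)) w

/-- Words of the canonical representation language: odd length, no factor 11,
not beginning with 000 nor with 101. -/
def IsRep (w : List Bool) : Prop :=
  Odd w.length ∧ no11 w ∧
    ¬ ([false, false, false] <+: w) ∧ ¬ ([true, false, true] <+: w)

/-- `Ik k = {i ∈ ℤ : −F_{2k} ≤ i < F_{2k+1}}`. -/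
def Ik (k : ℕ) : Set ℤ := {i : ℤ | -F (2*k) ≤ i ∧ i < F (2*k+1)}

/-- Shifted version of `Ik` incorporating `I_{−1} = ∅`. -/
def Iext : ℕ → Set ℤ
  | 0 => ∅
  | (k+1) => Ik k

/-- The morphism `h : 0 ↦ 00, 1 ↦ 01, 2 ↦ 10` on single letters. -/
def h3 : Fin 3 → List Bool
  | 0 => [false, false]
  | 1 => [false, true]
  | 2 => [true, false]

def gval : List Bool → ℤ
  | [] => 0
  | b :: t => bv b * F (t.length + 1) + gval t

theorem F_pos : ∀ n, 0 < F n
  | 0 => one_pos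
  | 1 => one_pos
  | (n+2) => by have := F_pos (n+1); have := F_pos n; simp [F]; omega

theorem F_le_succ (n : ℕ) : F n ≤ F (n+1) := by
  cases n with
  | zero => simp [F]
  | succ m => have := F_pos m; simp [F]; omega

theorem bv_nonneg (b : Bool) : 0 ≤ bv b := by cases b <;> simp [bv]

theorem gval_nonneg : ∀ w : List Bool, 0 ≤ gval w
  | [] => le_refl _
  | b :: t => by
      have h1 := gval_nonneg t
      have h2 := mul_nonneg (bv_nonneg b) (F_pos (t.length+1)).le
      simp [gval]; omega

theorem sum_eq_gval : ∀ w : List Bool,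
    (∑ i ∈ Finset.range w.length, bv (w.reverse.getD i false) * F (i+1)) = gval w
  | [] => by simp [gval]
  | b :: t => by
      have ih := sum_eq_gval t
      rw [List.length_cons, Finset.sum_range_succ, gval]
      have h1 : ((b :: t).reverse.getD t.length false) = b := by
        simp [List.reverse_cons, List.getD_eq_getElem?_getD]
      have h2 : ∀ i ∈ Finset.range t.length,
          bv ((b :: t).reverse.getD i false) * F (i+1)
            = bv (t.reverse.getD i false) * F (i+1) := by
        intro i hi
        simp only [Finset.mem_range] at hi
        congr 2
        rw [List.reverse_cons]
        rw [List.getD_eq_getElem?_getD, List.getD_eq_getElem?_getD,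
            List.getElem?_append_left (by simpa using hi)]
      rw [Finset.sum_congr rfl h2, ih, h1]
      ring

theorem gval_lt : ∀ w : List Bool, no11 w → gval w < F (w.length + 1)
  | [] => fun _ => by simp [gval, F]
  | false :: t => fun h => by
      have ih := gval_lt t (List.isChain_cons.mp h).2
      have := F_le_succ (t.length + 1)
      simp only [gval, List.length_cons, bv]
      simp only [if_neg Bool.false_ne_true]  -- bv false = 0
      omega
  | [true] => fun _ => by norm_num [gval, F, bv]
  | true :: true :: t => fun h => by
      rcases List.isChain_cons_cons.mp h with ⟨hc, -⟩
      exact absurd ⟨rfl, rfl⟩ hc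
  | true :: false :: t => fun h => by
      have ih := gval_lt t (List.isChain_cons.mp (List.isChain_cons_cons.mp h).2).2
      simp only [gval, List.length_cons, bv, if_pos rfl, if_neg Bool.false_ne_true]
      show 1 * F (t.length + 2) + (0 * F (t.length + 1) + gval t) < F (t.length + 3)
      have : F (t.length + 3) = F (t.length + 2) + F (t.length + 1) := rfl
      omega

theorem valF_100 (w : List Bool) :
    valF (true :: false :: false :: w) = gval w - F (w.length + 2) := by
  unfold valF
  have hlen : (true :: false :: false :: w).length = w.length + 3 := by simp
  rw [hlen]
  have : w.length + 3 - 1 = w.length + 2 := rfl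
  rw [this]
  have hrev : (true :: false :: false :: w).reverse = w.reverse ++ [false, false, true] := by
    simp
  have htop : ((true :: false :: false :: w).reverse.getD (w.length + 2) false) = true := by
    rw [hrev, List.getD_eq_getElem?_getD, List.getElem?_append_right (by simp)]
    simp
  rw [htop]
  have hs : (∑ i ∈ Finset.range (w.length + 2),
      bv ((true :: false :: false :: w).reverse.getD i false) * F (i+1)) = gval w := by
    have e0 : ((true :: false :: false :: w).reverse.getD w.length false) = false := by
      rw [hrev, List.getD_eq_getElem?_getD, List.getElem?_append_right (by simp)]
      simp
    have e1 : ((true :: false :: false :: w).reverse.getD (w.length+1) false) = false := by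
      rw [hrev, List.getD_eq_getElem?_getD, List.getElem?_append_right (by simp)]
      simp
    rw [Finset.sum_range_succ, Finset.sum_range_succ, e0, e1]
    have h2 : ∀ i ∈ Finset.range w.length,
        bv ((true :: false :: false :: w).reverse.getD i false) * F (i+1)
          = bv (w.reverse.getD i false) * F (i+1) := by
      intro i hi
      simp only [Finset.mem_range] at hi
      congr 2
      rw [hrev, List.getD_eq_getElem?_getD, List.getD_eq_getElem?_getD,
          List.getElem?_append_left (by simpa using hi)]
    rw [Finset.sum_congr rfl h2, sum_eq_gval w]
    simp [bv]
  rw [hs]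
  simp [bv]

/-- `−F_{2k+2} ≤ val_F(100w) < 0` for `w` of even length `2k` with no factor 11. -/
theorem valF_100_neg (k : ℕ) (w : List Bool)
    (hlen : w.length = 2*k) (h11 : no11 w) :
    -F (2*k+2) ≤ valF (true :: false :: false :: w) ∧
      valF (true :: false :: false :: w) < 0 := by
  rw [valF_100, hlen]
  have h1 := gval_nonneg w
  have h2 := gval_lt w h11
  rw [hlen] at h2
  have h3 := F_le_succ (2*k+1)
  have h4 : F (2*k+1+1) = F (2*k+2) := rfl
  constructor <;> omega
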